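/- (Brun–Hooley sieve, lower bound.) Let 𝒜 be a finite set of positive integers and 𝒫 a finite set of primes, and set P = Π_{p ∈ 𝒫} p and S(𝒜,𝒫) = #{a ∈ 𝒜 : gcd(a,P) = 1}. Suppose that for every d | P one has A_d := #{a ∈ 𝒜 : d | a} = X·g(d) + r_d, where X > 0 and g is a multiplicative function with 0 < g(p) < 1 for p ∈ 𝒫 and g(p) = 0 for p ∉ 𝒫. Let 𝒫 = 𝒫₁ ∪ ⋯ ∪ 𝒫_t be a partition of 𝒫 into disjoint subsets, let P_j = Π_{p ∈ 𝒫_j} p, let k₁,…,k_t be even positive integers, let V_j = Π_{p ∈ 𝒫_j}(1 − g(p)), L_j = log(V_j^{-1}), E = Σ_{j=1}^{t} e^{L_j} L_j^{k_j+1}/(k_j+1)!, R = Σ |r_{d₁⋯d_t}| over tuples (d₁,…,d_t) with d_j | P_j and ω(d_j) ≤ k_j for all j, and R' = Σ_{l=1}^{t} Σ |r_{d₁⋯d_t}| over tuples with d_j | P_j, ω(d_j) ≤ k_j for j ≠ l, and ω(d_l) = k_l + 1. Then S(𝒜,𝒫) ≥ X·Π_{p ∈ 𝒫}(1 − g(p))·(1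 − E) − R − R'. -/

import Mathlib

/-!
For each `a`, the indicator of `gcd(a, P) = 1` is `∏ⱼ Vⱼ(a)`, `Vⱼ(a) = ∏_{p ∈ Pⱼ} (1 - [p ∣ a])`.
Let `Sⱼ(a)` be its inclusion–exclusion expansion truncated at `#S ≤ kⱼ` and `Eⱼ(a)` the elementary
symmetric sum of degree `kⱼ + 1` of the `[p ∣ a]`. As `kⱼ` is even, the Bonferroni inequalities give
`0 ≤ Sⱼ - Vⱼ ≤ Eⱼ`, whence `∏ⱼ Vⱼ ≥ ∏ⱼ Sⱼ - ∑ₗ Eₗ ∏_{j ≠ l} Sⱼ`. Expanded, the right side is a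
`±1`-combination of indicators `[d ∣ a]` with `d ∣ ∏_{p ∈ P} p`, so summing over `A` gives `X` times
the same expression in the weights `g p`, plus remainders bounded by `R + R'`. In that main term
`Eₗ ≤ (∑_{p ∈ Pₗ} g p)^{kₗ+1} / (kₗ+1)!`, and `∑_{p ∈ Pₗ} g p ≤ Lₗ`, `e^{Lₗ} = Vₗ⁻¹`, so
`Eₗ ≤ Sₗ e^{Lₗ} Lₗ^{kₗ+1} / (kₗ+1)!`; this bounds it below by `X ∏ⱼ Sⱼ (1 - E) ≥ X ∏ⱼ Vⱼ (1 - E)`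
when `E ≤ 1`, and for `E > 1` the claim is trivial.
-/

open Finset
open scoped Function

theorem pow_succ_add_le_add_pow {x c : ℝ} (hx : 0 ≤ x) (hc : 0 ≤ c) (n : ℕ) :
    x ^ (n + 1) + (n + 1) * c * x ^ n ≤ (c + x) ^ (n + 1) := by
  induction n with
  | zero => simp [add_comm]
  | succ n ih =>
    have h := mul_le_mul_of_nonneg_left ih (add_nonneg hc hx)
    have : (c + x) * (x ^ (n + 1) + (n + 1) * c * x ^ n) =
        x ^ (n + 2) + (n + 2) * c * x ^ (n + 1) + (n + 1) * c ^ 2 * x ^ n := by ring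
    have : 0 ≤ (n + 1) * c ^ 2 * x ^ n := by positivity
    rw [pow_succ (c + x)]
    push_cast
    linarith

section InclusionExclusion

variable {ι : Type*} (w : ι → ℝ)

/-- The expansion `∏ i ∈ T, (1 - w i) = ∑ S ⊆ T, (-1) ^ #S ∏ i ∈ S, w i`, truncated at `#S ≤ k`. -/
noncomputable def truncInclExcl (T : Finset ι) (k : ℕ) : ℝ :=
  ∑ S ∈ T.powerset with S.card ≤ k, (-1) ^ S.card * ∏ i ∈ S, w i

noncomputable def elemSymm (T : Finset ι) (m : ℕ) : ℝ :=
  ∑ S ∈ T.powerset with S.card = m, ∏ i ∈ S, w i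

theorem truncInclExcl_empty (k : ℕ) : truncInclExcl w ∅ k = 1 := by
  simp [truncInclExcl, filter_singleton]

theorem elemSymm_empty_succ (m : ℕ) : elemSymm w ∅ (m + 1) = 0 := by
  simp [elemSymm, filter_singleton]

variable [DecidableEq ι]

theorem truncInclExcl_zero (T : Finset ι) : truncInclExcl w T 0 = 1 := by
  simp [truncInclExcl, filter_eq', card_eq_zero]

theorem elemSymm_zero (T : Finset ι) : elemSymm w T 0 = 1 := by
  simp [elemSymm, filter_eq', card_eq_zero]

variable {w}

theorem truncInclExcl_insert_succ {a : ι} {T : Finset ι} (ha : a ∉ T) (k : ℕ) :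
    truncInclExcl w (insert a T) (k + 1) =
      truncInclExcl w T (k + 1) - w a * truncInclExcl w T k := by
  simp only [truncInclExcl, sum_filter, sum_powerset_insert ha, mul_sum]
  rw [sub_eq_add_neg, ← sum_neg_distrib]
  congr 1
  refine sum_congr rfl fun S hS => ?_
  have haS : a ∉ S := fun h => ha (mem_powerset.mp hS h)
  rw [card_insert_of_notMem haS, prod_insert haS]
  split_ifs <;> first | omega | ring

theorem elemSymm_insert_succ {a : ι} {T : Finset ι} (ha : a ∉ T) (m : ℕ) :
    elemSymm w (insert a T) (m + 1) = elemSymm w T (m + 1) + w a * elemSymm w T m := by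
  simp only [elemSymm, sum_filter, sum_powerset_insert ha, mul_sum]
  congr 1
  refine sum_congr rfl fun S hS => ?_
  have haS : a ∉ S := fun h => ha (mem_powerset.mp hS h)
  rw [card_insert_of_notMem haS, prod_insert haS]
  split_ifs <;> first | omega | ring

theorem bonferroni {T : Finset ι} (hw : ∀ i ∈ T, 0 ≤ w i ∧ w i ≤ 1) (k : ℕ) :
    0 ≤ (-1) ^ k * (truncInclExcl w T k - ∏ i ∈ T, (1 - w i)) ∧
      (-1) ^ k * (truncInclExcl w T k - ∏ i ∈ T, (1 - w i)) ≤ elemSymm w T (k + 1) := by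
  induction T using Finset.induction_on generalizing k with
  | empty => simp [truncInclExcl_empty, elemSymm_empty_succ]
  | @insert a T ha ih =>
    have hwT : ∀ i ∈ T, 0 ≤ w i ∧ w i ≤ 1 := fun i hi => hw i (mem_insert_of_mem hi)
    obtain ⟨hwa0, hwa1⟩ := hw a (mem_insert_self a T)
    rw [prod_insert ha]
    cases k with
    | zero =>
      have hV0 : 0 ≤ ∏ i ∈ T, (1 - w i) := prod_nonneg fun i hi => by linarith [hwT i hi]
      have hV1 : ∏ i ∈ T, (1 - w i) ≤ 1 :=
        prod_le_one (fun i hi => by linarith [hwT i hi]) fun i hi => by linarith [hwT i hi]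
      have := (ih hwT 0).2
      simp only [truncInclExcl_zero, pow_zero, one_mul, zero_add] at this ⊢
      rw [elemSymm_insert_succ ha, elemSymm_zero]
      constructor <;> nlinarith
    | succ k =>
      have hgap : (-1) ^ (k + 1) * (truncInclExcl w (insert a T) (k + 1) -
            (1 - w a) * ∏ i ∈ T, (1 - w i)) =
          (-1) ^ (k + 1) * (truncInclExcl w T (k + 1) - ∏ i ∈ T, (1 - w i)) +
            w a * ((-1) ^ k * (truncInclExcl w T k - ∏ i ∈ T, (1 - w i))) := by
        rw [truncInclExcl_insert_succ ha, pow_succ]; ring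
      obtain ⟨h₁, h₁'⟩ := ih hwT (k + 1)
      obtain ⟨h₀, h₀'⟩ := ih hwT k
      rw [hgap, elemSymm_insert_succ ha]
      exact ⟨by positivity, add_le_add h₁' (mul_le_mul_of_nonneg_left h₀' hwa0)⟩

theorem prod_one_sub_le_truncInclExcl {T : Finset ι} (hw : ∀ i ∈ T, 0 ≤ w i ∧ w i ≤ 1)
    {k : ℕ} (hk : Even k) : ∏ i ∈ T, (1 - w i) ≤ truncInclExcl w T k := by
  simpa [hk.neg_one_pow] using (bonferroni hw k).1

theorem truncInclExcl_sub_prod_one_sub_le {T : Finset ι} (hw : ∀ i ∈ T, 0 ≤ w i ∧ w i ≤ 1)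
    {k : ℕ} (hk : Even k) :
    truncInclExcl w T k - ∏ i ∈ T, (1 - w i) ≤ elemSymm w T (k + 1) := by
  simpa [hk.neg_one_pow] using (bonferroni hw k).2

theorem elemSymm_mul_factorial_le {T : Finset ι} (hw : ∀ i ∈ T, 0 ≤ w i) (m : ℕ) :
    elemSymm w T m * m.factorial ≤ (∑ i ∈ T, w i) ^ m := by
  induction T using Finset.induction_on generalizing m with
  | empty => cases m <;> simp [elemSymm_zero, elemSymm_empty_succ]
  | @insert a T ha ih =>
    have hwT : ∀ i ∈ T, 0 ≤ w i := fun i hi => hw i (mem_insert_of_mem hi)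
    have hwa := hw a (mem_insert_self a T)
    cases m with
    | zero => simp [elemSymm_zero]
    | succ m =>
      have hfac : ((m + 1).factorial : ℝ) = (m + 1) * m.factorial := by
        rw [Nat.factorial_succ]; push_cast; ring
      have hlow := ih hwT (m + 1)
      rw [hfac] at hlow
      rw [elemSymm_insert_succ ha, sum_insert ha, hfac]
      calc (elemSymm w T (m + 1) + w a * elemSymm w T m) * ((m + 1) * m.factorial)
          = elemSymm w T (m + 1) * ((m + 1) * m.factorial) +
              (m + 1) * w a * (elemSymm w T m * m.factorial) := by ring
        _ ≤ (∑ i ∈ T, w i) ^ (m + 1) + (m + 1) * w a * (∑ i ∈ T, w i) ^ m := by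
          gcongr
          exact ih hwT m
        _ ≤ (w a + ∑ i ∈ T, w i) ^ (m + 1) := pow_succ_add_le_add_pow (sum_nonneg hwT) hwa m

omit [DecidableEq ι] in
theorem sum_le_log_inv_prod_one_sub {T : Finset ι} (hw : ∀ i ∈ T, w i < 1) :
    ∑ i ∈ T, w i ≤ Real.log (∏ i ∈ T, (1 - w i))⁻¹ := by
  rw [Real.log_inv, Real.log_prod fun i hi => (sub_pos.mpr (hw i hi)).ne', ← sum_neg_distrib]
  exact sum_le_sum fun i hi => by linarith [Real.log_le_sub_one_of_pos (sub_pos.mpr (hw i hi))]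

theorem elemSymm_le_prod_one_sub_mul {T : Finset ι} (hw : ∀ i ∈ T, 0 ≤ w i ∧ w i < 1) (m : ℕ) :
    elemSymm w T m ≤ (∏ i ∈ T, (1 - w i)) *
      (Real.exp (Real.log (∏ i ∈ T, (1 - w i))⁻¹) *
        Real.log (∏ i ∈ T, (1 - w i))⁻¹ ^ m / m.factorial) := by
  have hV : 0 < ∏ i ∈ T, (1 - w i) := prod_pos fun i hi => sub_pos.mpr (hw i hi).2
  rw [Real.exp_log (inv_pos.mpr hV), ← mul_div_assoc, ← mul_assoc, mul_inv_cancel₀ hV.ne',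
    one_mul, le_div_iff₀ (by positivity)]
  calc elemSymm w T m * m.factorial ≤ (∑ i ∈ T, w i) ^ m :=
        elemSymm_mul_factorial_le (fun i hi => (hw i hi).1) m
    _ ≤ Real.log (∏ i ∈ T, (1 - w i))⁻¹ ^ m :=
        pow_le_pow_left₀ (sum_nonneg fun i hi => (hw i hi).1)
          (sum_le_log_inv_prod_one_sub fun i hi => (hw i hi).2) m

end InclusionExclusion

section Blocks

variable {κ : Type*} [DecidableEq κ]

theorem prod_sub_prod_le_sum_mul_prod_erase {s : Finset κ} {x y : κ → ℝ}
    (hy : ∀ j ∈ s, 0 ≤ y j) (hyx : ∀ j ∈ s, y j ≤ x j) :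
    ∏ j ∈ s, x j - ∏ j ∈ s, y j ≤ ∑ l ∈ s, (x l - y l) * ∏ j ∈ s.erase l, x j := by
  induction s using Finset.induction_on with
  | empty => simp
  | @insert a s ha ih =>
    have hy' : ∀ j ∈ s, 0 ≤ y j := fun j hj => hy j (mem_insert_of_mem hj)
    have hyx' : ∀ j ∈ s, y j ≤ x j := fun j hj => hyx j (mem_insert_of_mem hj)
    have hya := hy a (mem_insert_self a s)
    have hyxa := hyx a (mem_insert_self a s)
    have hprod : ∏ j ∈ s, y j ≤ ∏ j ∈ s, x j := prod_le_prod hy' hyx'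
    have herase : ∀ l ∈ s, ∏ j ∈ (insert a s).erase l, x j = x a * ∏ j ∈ s.erase l, x j :=
      fun l hl => by
        rw [erase_insert_of_ne (ne_of_mem_of_not_mem hl ha).symm,
          prod_insert fun h => ha (mem_of_mem_erase h)]
    rw [prod_insert ha, prod_insert ha, sum_insert ha, erase_insert ha,
      sum_congr rfl fun l hl => by rw [herase l hl, mul_left_comm], ← mul_sum]
    have := mul_le_mul_of_nonneg_left (ih hy' hyx') (hya.trans hyxa)
    nlinarith [mul_le_mul_of_nonneg_left hprod (sub_nonneg.mpr hyxa)]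

variable [Fintype κ]

theorem prod_sub_sum_mul_prod_erase_le {x y e : κ → ℝ} (hy : ∀ j, 0 ≤ y j)
    (hyx : ∀ j, y j ≤ x j) (hxy : ∀ j, x j - y j ≤ e j) :
    ∏ j, x j - ∑ l, e l * ∏ j ∈ univ.erase l, x j ≤ ∏ j, y j := by
  have := prod_sub_prod_le_sum_mul_prod_erase (s := univ) (fun j _ => hy j) (fun j _ => hyx j)
  have : ∑ l, (x l - y l) * ∏ j ∈ univ.erase l, x j ≤ ∑ l, e l * ∏ j ∈ univ.erase l, x j :=
    sum_le_sum fun l _ => mul_le_mul_of_nonneg_right (hxy l)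
      (prod_nonneg fun j _ => (hy j).trans (hyx j))
  linarith

theorem prod_mul_one_sub_sum_le {x v e ε : κ → ℝ} (hv : ∀ j, 0 ≤ v j) (hvx : ∀ j, v j ≤ x j)
    (hε : ∀ j, 0 ≤ ε j) (he : ∀ j, e j ≤ v j * ε j) (hε1 : ∑ j, ε j ≤ 1) :
    (∏ j, v j) * (1 - ∑ j, ε j) ≤ ∏ j, x j - ∑ l, e l * ∏ j ∈ univ.erase l, x j := by
  have hx : ∀ j, 0 ≤ x j := fun j => (hv j).trans (hvx j)
  calc (∏ j, v j) * (1 - ∑ j, ε j) ≤ (∏ j, x j) * (1 - ∑ j, ε j) :=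
        mul_le_mul_of_nonneg_right (prod_le_prod (fun j _ => hv j) fun j _ => hvx j)
          (sub_nonneg.mpr hε1)
    _ = ∏ j, x j - ∑ l, ε l * x l * ∏ j ∈ univ.erase l, x j := by
        simp only [mul_assoc, mul_prod_erase _ _ (mem_univ _), ← sum_mul]; ring
    _ ≤ ∏ j, x j - ∑ l, e l * ∏ j ∈ univ.erase l, x j := by
        gcongr with l
        · exact prod_nonneg fun j _ => hx j
        · nlinarith [he l, hvx l, hε l]

end Blocks

section BrunHooley

variable {κ ι : Type*} [Fintype κ] [DecidableEq κ]

noncomputable def blockProduct (C : κ → Finset (Finset ι)) (c : κ → Finset ι → ℝ)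
    (w : ι → ℝ) : ℝ :=
  ∏ j, ∑ S ∈ C j, c j S * ∏ i ∈ S, w i

noncomputable def brunHooleyWeight (Pj : κ → Finset ι) (k : κ → ℕ) (w : ι → ℝ) : ℝ :=
  ∏ j, truncInclExcl w (Pj j) (k j) -
    ∑ l, elemSymm w (Pj l) (k l + 1) * ∏ j ∈ univ.erase l, truncInclExcl w (Pj j) (k j)

variable {Pj : κ → Finset ι} {k : κ → ℕ}

theorem blockProduct_eq_elemSymm_mul_prod_erase (w : ι → ℝ) (l : κ) :
    blockProduct
        (fun j => (Pj j).powerset.filter fun S => if j = l then S.card = k l + 1 else S.card ≤ k j)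
        (fun j S => if j = l then 1 else (-1) ^ S.card) w =
      elemSymm w (Pj l) (k l + 1) * ∏ j ∈ univ.erase l, truncInclExcl w (Pj j) (k j) := by
  rw [blockProduct, ← mul_prod_erase univ _ (mem_univ l)]
  congr 1
  · simp [elemSymm]
  · refine prod_congr rfl fun j hj => ?_
    simp only [if_neg (ne_of_mem_erase hj)]
    rfl

variable [DecidableEq ι] {w : ι → ℝ}

theorem brunHooleyWeight_le_prod (hk : ∀ j, Even (k j))
    (hw : ∀ j, ∀ i ∈ Pj j, 0 ≤ w i ∧ w i ≤ 1) :
    brunHooleyWeight Pj k w ≤ ∏ j, ∏ i ∈ Pj j, (1 - w i) :=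
  prod_sub_sum_mul_prod_erase_le
    (fun j => prod_nonneg fun i hi => sub_nonneg.mpr (hw j i hi).2)
    (fun j => prod_one_sub_le_truncInclExcl (hw j) (hk j))
    (fun j => truncInclExcl_sub_prod_one_sub_le (hw j) (hk j))

theorem prod_mul_one_sub_le_brunHooleyWeight (hk : ∀ j, Even (k j))
    (hw : ∀ j, ∀ i ∈ Pj j, 0 ≤ w i ∧ w i < 1)
    (hε : ∑ j, Real.exp (Real.log (∏ i ∈ Pj j, (1 - w i))⁻¹) *
        Real.log (∏ i ∈ Pj j, (1 - w i))⁻¹ ^ (k j + 1) / (k j + 1).factorial ≤ 1) :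
    (∏ j, ∏ i ∈ Pj j, (1 - w i)) * (1 - ∑ j, Real.exp (Real.log (∏ i ∈ Pj j, (1 - w i))⁻¹) *
        Real.log (∏ i ∈ Pj j, (1 - w i))⁻¹ ^ (k j + 1) / (k j + 1).factorial) ≤
      brunHooleyWeight Pj k w := by
  have hw' : ∀ j, ∀ i ∈ Pj j, 0 ≤ w i ∧ w i ≤ 1 :=
    fun j i hi => ⟨(hw j i hi).1, (hw j i hi).2.le⟩
  have hV : ∀ j, 0 < ∏ i ∈ Pj j, (1 - w i) :=
    fun j => prod_pos fun i hi => sub_pos.mpr (hw j i hi).2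
  refine prod_mul_one_sub_sum_le (fun j => (hV j).le)
    (fun j => prod_one_sub_le_truncInclExcl (hw' j) (hk j)) (fun j => ?_)
    (fun j => elemSymm_le_prod_one_sub_mul (hw j) _) hε
  have hL : 0 ≤ Real.log (∏ i ∈ Pj j, (1 - w i))⁻¹ := Real.log_nonneg <|
    (one_le_inv₀ (hV j)).mpr <| prod_le_one (fun i hi => sub_nonneg.mpr (hw' j i hi).2)
      fun i hi => by linarith [(hw j i hi).1]
  positivity

end BrunHooley

section Sieve

noncomputable def dvdIndicator (a p : ℕ) : ℝ := if p ∣ a then 1 else 0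

theorem map_prod_primes {M : Type*} [CommMonoid M] {g : ℕ → M} (hg1 : g 1 = 1)
    (hgmult : ∀ m n : ℕ, m.Coprime n → g (m * n) = g m * g n) {U : Finset ℕ}
    (hU : ∀ p ∈ U, p.Prime) : g (∏ p ∈ U, p) = ∏ p ∈ U, g p := by
  induction U using Finset.induction_on with
  | empty => simpa using hg1
  | @insert a U ha ih =>
    have hU' : ∀ p ∈ U, p.Prime := fun p hp => hU p (mem_insert_of_mem hp)
    have hcop : a.Coprime (∏ p ∈ U, p) := Nat.Coprime.prod_right fun q hq =>
      (Nat.coprime_primes (hU a (mem_insert_self a U)) (hU' q hq)).mpr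
        (ne_of_mem_of_not_mem hq ha).symm
    rw [prod_insert ha, prod_insert ha, hgmult _ _ hcop, ih hU']

theorem image_prod_powerset_filter {T : Finset ℕ} (hT : ∀ p ∈ T, p.Prime) (Q : ℕ → Prop)
    [DecidablePred Q] :
    (T.powerset.filter fun S => Q S.card).image (fun S => ∏ p ∈ S, p) =
      (∏ p ∈ T, p).divisors.filter fun d => Q d.primeFactors.card := by
  have hT0 : ∏ p ∈ T, p ≠ 0 := prod_ne_zero_iff.mpr fun p hp => (hT p hp).ne_zero
  have hsqf : Squarefree (∏ p ∈ T, p) :=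
    squarefree_prod_of_pairwise_isCoprime
      (fun p hp q hq hpq =>
        Nat.coprime_iff_isRelPrime.mp ((Nat.coprime_primes (hT p hp) (hT q hq)).mpr hpq))
      fun p hp => (hT p hp).prime.squarefree
  ext d
  simp only [mem_image, mem_filter, mem_powerset, Nat.mem_divisors]
  constructor
  · rintro ⟨S, ⟨hST, hQ⟩, rfl⟩
    refine ⟨⟨prod_dvd_prod_of_subset _ _ _ hST, hT0⟩, ?_⟩
    rwa [Nat.primeFactors_prod fun p hp => hT p (hST hp)]
  · rintro ⟨⟨hd, -⟩, hQ⟩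
    refine ⟨d.primeFactors, ⟨?_, hQ⟩,
      Nat.prod_primeFactors_of_squarefree (hsqf.squarefree_of_dvd hd)⟩
    simpa only [Nat.primeFactors_prod hT] using Nat.primeFactors_mono hd hT0

theorem card_filter_coprime_prod_eq_sum_prod (A : Finset ℕ) {P : Finset ℕ}
    (hP : ∀ p ∈ P, p.Prime) :
    ((A.filter (fun a => a.Coprime (∏ p ∈ P, p))).card : ℝ) =
      ∑ a ∈ A, ∏ p ∈ P, (1 - dvdIndicator a p) := by
  have hcop : ∀ a : ℕ, a.Coprime (∏ p ∈ P, p) ↔ ∀ p ∈ P, ¬p ∣ a := fun a => by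
    rw [Nat.coprime_prod_right_iff]
    exact forall₂_congr fun p hp => by rw [Nat.coprime_comm, (hP p hp).coprime_iff_not_dvd]
  have hind : ∀ a p : ℕ, 1 - dvdIndicator a p = if ¬p ∣ a then 1 else 0 := fun a p => by
    unfold dvdIndicator; split_ifs <;> simp
  simp only [hind, prod_boole, ← hcop, sum_boole]

variable {κ : Type*} [Fintype κ] [DecidableEq κ]

theorem sum_piFinset_powerset_eq_sum_piFinset_divisors {Pj : κ → Finset ℕ}
    (hP : ∀ j, ∀ p ∈ Pj j, p.Prime) (Q : κ → ℕ → Prop) [∀ j, DecidablePred (Q j)]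
    (F : ℕ → ℝ) :
    ∑ S ∈ Fintype.piFinset (fun j => (Pj j).powerset.filter fun S => Q j S.card),
        F (∏ j, ∏ p ∈ S j, p) =
      ∑ d ∈ Fintype.piFinset
          (fun j => (∏ p ∈ Pj j, p).divisors.filter fun d => Q j d.primeFactors.card),
        F (∏ j, d j) := by
  have himage := fun j => image_prod_powerset_filter (hP j) (Q j)
  simp only [← himage, Fintype.piFinset_image]
  rw [sum_image]
  intro S hS T hT hST
  funext j
  have hS := mem_powerset.mp (mem_filter.mp (Fintype.mem_piFinset.mp hS j)).1
  have hT := mem_powerset.mp (mem_filter.mp (Fintype.mem_piFinset.mp hT j)).1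
  rw [← Nat.primeFactors_prod fun p hp => hP j p (hS hp),
    ← Nat.primeFactors_prod fun p hp => hP j p (hT hp)]
  exact congrArg _ (congrFun hST j)

theorem abs_sum_mul_le_sum_abs {α : Type*} {s : Finset α} {u v : α → ℝ}
    (hu : ∀ x ∈ s, |u x| ≤ 1) : |∑ x ∈ s, u x * v x| ≤ ∑ x ∈ s, |v x| :=
  (abs_sum_le_sum_abs _ _).trans <| sum_le_sum fun x hx => by
    rw [abs_mul]; exact mul_le_of_le_one_left (abs_nonneg _) (hu x hx)

variable {A P : Finset ℕ} {X : ℝ} {g r : ℕ → ℝ}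

theorem sum_prod_dvdIndicator (hP : ∀ p ∈ P, p.Prime) (hg1 : g 1 = 1)
    (hgmult : ∀ m n : ℕ, m.Coprime n → g (m * n) = g m * g n)
    (hAd : ∀ d : ℕ, d ∣ ∏ p ∈ P, p → ((A.filter (fun a => d ∣ a)).card : ℝ) = X * g d + r d)
    {U : Finset ℕ} (hU : U ⊆ P) :
    ∑ a ∈ A, ∏ p ∈ U, dvdIndicator a p = X * ∏ p ∈ U, g p + r (∏ p ∈ U, p) := by
  have hUp : ∀ p ∈ U, p.Prime := fun p hp => hP p (hU hp)
  have hdvd : ∀ a, (∀ p ∈ U, p ∣ a) ↔ ∏ p ∈ U, p ∣ a := fun a =>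
    ⟨prod_primes_dvd a fun p hp => (hUp p hp).prime, fun h p hp => (dvd_prod_of_mem _ hp).trans h⟩
  simp only [dvdIndicator, prod_boole, hdvd, sum_boole]
  rw [hAd _ (prod_dvd_prod_of_subset _ _ _ hU), map_prod_primes hg1 hgmult hUp]

theorem sum_blockProduct_dvdIndicator (hP : ∀ p ∈ P, p.Prime) (hg1 : g 1 = 1)
    (hgmult : ∀ m n : ℕ, m.Coprime n → g (m * n) = g m * g n)
    (hAd : ∀ d : ℕ, d ∣ ∏ p ∈ P, p → ((A.filter (fun a => d ∣ a)).card : ℝ) = X * g d + r d)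
    {Pj : κ → Finset ℕ} (hPj : ∀ j, Pj j ⊆ P) (hdisj : Pairwise (Disjoint on Pj))
    {C : κ → Finset (Finset ℕ)} (hC : ∀ j, ∀ S ∈ C j, S ⊆ Pj j) (c : κ → Finset ℕ → ℝ) :
    ∑ a ∈ A, blockProduct C c (dvdIndicator a) =
      X * blockProduct C c g +
        ∑ S ∈ Fintype.piFinset C, (∏ j, c j (S j)) * r (∏ j, ∏ p ∈ S j, p) := by
  have hblock : ∀ S ∈ Fintype.piFinset C, ∑ a ∈ A, ∏ j, ∏ p ∈ S j, dvdIndicator a p =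
      X * ∏ j, ∏ p ∈ S j, g p + r (∏ j, ∏ p ∈ S j, p) := by
    intro S hS
    have hsub : ∀ j, S j ⊆ Pj j := fun j => hC j _ (Fintype.mem_piFinset.mp hS j)
    have hdisjS : ((univ : Finset κ) : Set κ).PairwiseDisjoint S := fun i _ j _ hij =>
      (hdisj hij).mono (hsub i) (hsub j)
    simp only [← prod_biUnion hdisjS]
    exact sum_prod_dvdIndicator hP hg1 hgmult hAd
      (biUnion_subset.mpr fun j _ => (hsub j).trans (hPj j))
  simp only [blockProduct, prod_univ_sum, mul_sum]
  rw [sum_comm, ← sum_add_distrib]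
  refine sum_congr rfl fun S hS => ?_
  simp only [prod_mul_distrib, ← mul_sum, hblock S hS]
  ring

theorem abs_sum_blockProduct_dvdIndicator_sub_le (hP : ∀ p ∈ P, p.Prime) (hg1 : g 1 = 1)
    (hgmult : ∀ m n : ℕ, m.Coprime n → g (m * n) = g m * g n)
    (hAd : ∀ d : ℕ, d ∣ ∏ p ∈ P, p → ((A.filter (fun a => d ∣ a)).card : ℝ) = X * g d + r d)
    {Pj : κ → Finset ℕ} (hPj : ∀ j, Pj j ⊆ P) (hdisj : Pairwise (Disjoint on Pj))
    (Q : κ → ℕ → Prop) [∀ j, DecidablePred (Q j)] {c : κ → Finset ℕ → ℝ}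
    (hc : ∀ j S, |c j S| ≤ 1) :
    |∑ a ∈ A, blockProduct (fun j => (Pj j).powerset.filter fun S => Q j S.card) c
        (dvdIndicator a) -
      X * blockProduct (fun j => (Pj j).powerset.filter fun S => Q j S.card) c g| ≤
      ∑ d ∈ Fintype.piFinset
          (fun j => (∏ p ∈ Pj j, p).divisors.filter fun d => Q j d.primeFactors.card),
        |r (∏ j, d j)| := by
  rw [sum_blockProduct_dvdIndicator hP hg1 hgmult hAd hPj hdisj
      (fun j S hS => mem_powerset.mp (mem_filter.mp hS).1) c, add_sub_cancel_left,
    ← sum_piFinset_powerset_eq_sum_piFinset_divisors (fun j p hp => hP p (hPj j hp)) Q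
      fun n => |r n|]
  exact abs_sum_mul_le_sum_abs fun S _ => by
    rw [abs_prod]; exact prod_le_one (fun j _ => abs_nonneg _) fun j _ => hc j (S j)

theorem le_sum_brunHooleyWeight_dvdIndicator (hP : ∀ p ∈ P, p.Prime) (hg1 : g 1 = 1)
    (hgmult : ∀ m n : ℕ, m.Coprime n → g (m * n) = g m * g n)
    (hAd : ∀ d : ℕ, d ∣ ∏ p ∈ P, p → ((A.filter (fun a => d ∣ a)).card : ℝ) = X * g d + r d)
    {Pj : κ → Finset ℕ} (hPj : ∀ j, Pj j ⊆ P) (hdisj : Pairwise (Disjoint on Pj)) (k : κ → ℕ) :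
    X * brunHooleyWeight Pj k g -
        ∑ d ∈ Fintype.piFinset (fun j => (∏ p ∈ Pj j, p).divisors.filter
          fun m => m.primeFactors.card ≤ k j), |r (∏ j, d j)| -
        ∑ l, ∑ d ∈ Fintype.piFinset (fun j => (∏ p ∈ Pj j, p).divisors.filter fun m =>
          if j = l then m.primeFactors.card = k l + 1 else m.primeFactors.card ≤ k j),
          |r (∏ j, d j)| ≤
      ∑ a ∈ A, brunHooleyWeight Pj k (dvdIndicator a) := by
  have hmain : -∑ d ∈ Fintype.piFinset (fun j => (∏ p ∈ Pj j, p).divisors.filter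
          fun m => m.primeFactors.card ≤ k j), |r (∏ j, d j)| ≤
      ∑ a ∈ A, ∏ j, truncInclExcl (dvdIndicator a) (Pj j) (k j) -
        X * ∏ j, truncInclExcl g (Pj j) (k j) :=
    (abs_le.mp (abs_sum_blockProduct_dvdIndicator_sub_le hP hg1 hgmult hAd hPj hdisj
      (fun j n => n ≤ k j) (c := fun _ S => (-1) ^ S.card) fun _ _ => by simp)).1
  have htail := fun l => (abs_le.mp (abs_sum_blockProduct_dvdIndicator_sub_le hP hg1
    hgmult hAd hPj hdisj (fun j n => if j = l then n = k l + 1 else n ≤ k j)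
    (c := fun j S => if j = l then 1 else (-1) ^ S.card) fun j S => by split_ifs <;> simp)).2
  simp only [blockProduct_eq_elemSymm_mul_prod_erase] at htail
  have htails := sum_le_sum fun l (_ : l ∈ univ) => htail l
  simp only [brunHooleyWeight, sum_sub_distrib, mul_sub, mul_sum] at htails ⊢
  rw [sum_comm (s := A)]
  linarith

end Sieve

theorem brun_hooley_lower_general
    (A : Finset ℕ)
    (P : Finset ℕ) (hP : ∀ p ∈ P, Nat.Prime p)
    (X : ℝ) (hX : 0 < X)
    (g : ℕ → ℝ) (hg1 : g 1 = 1)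
    (hgmult : ∀ m n : ℕ, Nat.Coprime m n → g (m * n) = g m * g n)
    (hgP : ∀ p ∈ P, 0 < g p ∧ g p < 1)
    (r : ℕ → ℝ)
    (hAd : ∀ d : ℕ, d ∣ ∏ p ∈ P, p →
      ((A.filter (fun a => d ∣ a)).card : ℝ) = X * g d + r d)
    (t : ℕ) (Pj : Fin t → Finset ℕ)
    (hdisj : ∀ i j : Fin t, i ≠ j → Disjoint (Pj i) (Pj j))
    (hunion : Finset.univ.biUnion Pj = P)
    (k : Fin t → ℕ) (hkeven : ∀ j, Even (k j))
    (E R R' : ℝ)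
    (hE : E = ∑ j : Fin t,
      Real.exp (Real.log (∏ p ∈ Pj j, (1 - g p))⁻¹) *
        (Real.log (∏ p ∈ Pj j, (1 - g p))⁻¹) ^ (k j + 1) /
          (Nat.factorial (k j + 1)))
    (hR : R = ∑ d ∈ Fintype.piFinset (fun j : Fin t =>
        (∏ p ∈ Pj j, p).divisors.filter (fun m => m.primeFactors.card ≤ k j)),
      |r (∏ j : Fin t, d j)|)
    (hR' : R' = ∑ l : Fin t, ∑ d ∈ Fintype.piFinset (fun j : Fin t =>
        (∏ p ∈ Pj j, p).divisors.filter (fun m =>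
          if j = l then m.primeFactors.card = k l + 1
          else m.primeFactors.card ≤ k j)),
      |r (∏ j : Fin t, d j)|) :
    ((A.filter (fun a => Nat.Coprime a (∏ p ∈ P, p))).card : ℝ) ≥
      X * (∏ p ∈ P, (1 - g p)) * (1 - E) - R - R' := by
  have hdisj' : Pairwise (Disjoint on Pj) := fun i j hij => hdisj i j hij
  have hPj : ∀ j, Pj j ⊆ P := fun j => hunion ▸ subset_biUnion_of_mem Pj (mem_univ j)
  have hprod : ∀ f : ℕ → ℝ, ∏ p ∈ P, f p = ∏ j, ∏ p ∈ Pj j, f p := fun f => by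
    rw [← hunion, prod_biUnion (hdisj'.set_pairwise _)]
  have hg : ∀ j, ∀ p ∈ Pj j, 0 ≤ g p ∧ g p < 1 := fun j p hp =>
    ⟨(hgP p (hPj j hp)).1.le, (hgP p (hPj j hp)).2⟩
  have hR0 : 0 ≤ R := hR ▸ sum_nonneg fun _ _ => abs_nonneg _
  have hR'0 : 0 ≤ R' := hR' ▸ sum_nonneg fun _ _ => sum_nonneg fun _ _ => abs_nonneg _
  rcases le_or_gt E 1 with hE1 | hE1
  · subst hE hR hR'
    rw [ge_iff_le, card_filter_coprime_prod_eq_sum_prod A hP, mul_assoc]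
    simp only [hprod]
    calc _ ≤ X * brunHooleyWeight Pj k g - _ - _ := by
          gcongr
          exact prod_mul_one_sub_le_brunHooleyWeight hkeven hg hE1
      _ ≤ ∑ a ∈ A, brunHooleyWeight Pj k (dvdIndicator a) :=
          le_sum_brunHooleyWeight_dvdIndicator hP hg1 hgmult hAd hPj hdisj' k
      _ ≤ _ := sum_le_sum fun a _ => brunHooleyWeight_le_prod hkeven fun j p _ => by
          unfold dvdIndicator; split_ifs <;> norm_num
  · have hV : 0 ≤ ∏ p ∈ P, (1 - g p) := prod_nonneg fun p hp => sub_nonneg.mpr (hgP p hp).2.le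
    have : X * (∏ p ∈ P, (1 - g p)) * (1 - E) ≤ 0 :=
      mul_nonpos_of_nonneg_of_nonpos (mul_nonneg hX.le hV) (by linarith)
    have : (0 : ℝ) ≤ (A.filter (fun a => Nat.Coprime a (∏ p ∈ P, p))).card := Nat.cast_nonneg _
    linarith

/-- **Brun–Hooley sieve, lower bound** (Ford–Halberstam).
With the same setup as the upper bound, and additionally
`R' = ∑_{l} ∑_{dⱼ ∣ Pⱼ, ω(dⱼ) ≤ kⱼ (j ≠ l), ω(d_l) = k_l + 1} |r_{d₁⋯d_t}|`,
one has `#{a ∈ A : gcd(a, ∏_{p ∈ P} p) = 1} ≥ X · ∏_{p ∈ P}(1 - g p) · (1 - E) - R - R'`. -/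
theorem brun_hooley_lower
    (A : Finset ℕ) (hA : ∀ a ∈ A, 0 < a)
    (P : Finset ℕ) (hP : ∀ p ∈ P, Nat.Prime p)
    (X : ℝ) (hX : 0 < X)
    (g : ℕ → ℝ) (hg1 : g 1 = 1)
    (hgmult : ∀ m n : ℕ, Nat.Coprime m n → g (m * n) = g m * g n)
    (hgP : ∀ p ∈ P, 0 < g p ∧ g p < 1)
    (hgP' : ∀ p : ℕ, p.Prime → p ∉ P → g p = 0)
    (r : ℕ → ℝ)
    (hAd : ∀ d : ℕ, d ∣ ∏ p ∈ P, p →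
      ((A.filter (fun a => d ∣ a)).card : ℝ) = X * g d + r d)
    (t : ℕ) (Pj : Fin t → Finset ℕ)
    (hdisj : ∀ i j : Fin t, i ≠ j → Disjoint (Pj i) (Pj j))
    (hunion : Finset.univ.biUnion Pj = P)
    (k : Fin t → ℕ) (hkeven : ∀ j, Even (k j)) (hkpos : ∀ j, 0 < k j)
    (E R R' : ℝ)
    (hE : E = ∑ j : Fin t,
      Real.exp (Real.log (∏ p ∈ Pj j, (1 - g p))⁻¹) *
        (Real.log (∏ p ∈ Pj j, (1 - g p))⁻¹) ^ (k j + 1) /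
          (Nat.factorial (k j + 1)))
    (hR : R = ∑ d ∈ Fintype.piFinset (fun j : Fin t =>
        (∏ p ∈ Pj j, p).divisors.filter (fun m => m.primeFactors.card ≤ k j)),
      |r (∏ j : Fin t, d j)|)
    (hR' : R' = ∑ l : Fin t, ∑ d ∈ Fintype.piFinset (fun j : Fin t =>
        (∏ p ∈ Pj j, p).divisors.filter (fun m =>
          if j = l then m.primeFactors.card = k l + 1
          else m.primeFactors.card ≤ k j)),
      |r (∏ j : Fin t, d j)|) :
    ((A.filter (fun a => Nat.Coprime a (∏ p ∈ P, p))).card : ℝ) ≥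
      X * (∏ p ∈ P, (1 - g p)) * (1 - E) - R - R' :=
  brun_hooley_lower_general A P hP X hX g hg1 hgmult hgP r hAd t Pj hdisj hunion k hkeven E R R' hE
    hR hR'
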